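/- arXiv:0904.0071 — 4 statements merged into one kernel-verified Lean document; each statement's English description precedes it below -/
import Mathlib

section
/- In any classical Kripke model, w forces A→B if and only if for all w' ≥ w, if w' forces A then w' forces B. -/
/-- Formulas of predicate logic (higher-order abstract syntax over a
type `C` of constants/domain elements). -/
inductive Formula (C : Type) : Type where
  | atom : ℕ → List C → Formula C
  | top : Formula C
  | bot : Formula C
  | and : Formula C → Formula C → Formula C
  | or : Formula C → Formula C → Formula C
  | imp : Formula C → Formula C → Formula C
  | all : (C → Formula C) → Formula C
  | ex : (C → Formula C) → Formula C

/-- The data of a classical Kripke model: possible worlds, ordering,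
domain function, strong refutation on atomic sentences, exploding predicate. -/
structure CKPre (C : Type) where
  K : Type
  le : K → K → Prop
  D : K → Set C
  srefAtom : K → ℕ → List C → Prop
  expl : K → Prop

namespace CKPre

variable {C : Type}

/-- Orthogonality: every greater world satisfying `S` is exploding. -/
def orth (M : CKPre C) (S : M.K → Prop) (w : M.K) : Prop :=
  ∀ w', M.le w w' → S w' → M.expl w'

/-- Strong refutation, extended from atomic to composite sentences;
(non-strong) forcing and refutation are expressed via `orth`. -/
def sref (M : CKPre C) : Formula C → M.K → Prop
  | .atom p args, w => M.srefAtom w p args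
  | .bot, _ => True
  | .top, _ => False
  | .and A B, w => M.orth (M.orth (M.sref A)) w ∨ M.orth (M.orth (M.sref B)) w
  | .or A B, w => M.orth (M.orth (M.sref A)) w ∧ M.orth (M.orth (M.sref B)) w
  | .imp A B, w => M.orth (M.sref A) w ∧ M.orth (M.orth (M.sref B)) w
  | .all A, w => ∃ d ∈ M.D w, M.orth (M.orth (M.sref (A d))) w
  | .ex A, w => ∀ w', M.le w w' → ∀ d ∈ M.D w', M.orth (M.orth (M.sref (A d))) w'

/-- `w` forces `A`: every `w' ≥ w` strongly refuting `A` is exploding. -/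
def force (M : CKPre C) (A : Formula C) : M.K → Prop := M.orth (M.sref A)

/-- `w` refutes `A`: every `w' ≥ w` forcing `A` is exploding. -/
def refute (M : CKPre C) (A : Formula C) : M.K → Prop := M.orth (M.force A)

end CKPre

/-- A classical Kripke model: the data together with the required properties
(inhabited poset of worlds, monotone domain, monotone strong refutation
on atoms with arguments in the domain, monotone exploding predicate). -/
structure CKModel (C : Type) where
  pre : CKPre C
  le_refl : ∀ w, pre.le w w
  le_trans : ∀ w₁ w₂ w₃, pre.le w₁ w₂ → pre.le w₂ w₃ → pre.le w₁ w₃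
  le_antisymm : ∀ w₁ w₂, pre.le w₁ w₂ → pre.le w₂ w₁ → w₁ = w₂
  nonempty : Nonempty pre.K
  D_mono : ∀ w w', pre.le w w' → pre.D w ⊆ pre.D w'
  srefAtom_dom : ∀ w p args, pre.srefAtom w p args → ∀ d ∈ args, d ∈ pre.D w
  srefAtom_mono : ∀ w w' p args, pre.le w w' → pre.srefAtom w p args → pre.srefAtom w' p args
  expl_mono : ∀ w w', pre.le w w' → pre.expl w → pre.expl w'

/-- Negation ¬A := A → ⊥. -/
def Formula.neg {C : Type} (A : Formula C) : Formula C := Formula.imp A Formula.bot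

/-!
A world `w'' ≥ w'` that strongly refutes `B`, where `w'` forces `A`, strongly refutes `A → B`:
forcing is upward closed, and strong refutation is monotone, hence implies refutation.
Conversely, a world that strongly refutes `A → B` forces `A`, hence `B`, while refuting `B`,
so it is exploding.
-/

namespace CKModel

variable {C : Type} (M : CKModel C)

lemma orth_mono {S : M.pre.K → Prop} {w w' : M.pre.K} (h : M.pre.le w w')
    (hw : M.pre.orth S w) : M.pre.orth S w' :=
  fun w'' h' => hw w'' (M.le_trans _ _ _ h h')

lemma expl_of_orth {S : M.pre.K → Prop} {w : M.pre.K} (h : M.pre.orth S w) (hS : S w) :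
    M.pre.expl w :=
  h w (M.le_refl w) hS

lemma orth_orth_of_mono {S : M.pre.K → Prop} (hS : ∀ w w', M.pre.le w w' → S w → S w')
    {w : M.pre.K} (h : S w) : M.pre.orth (M.pre.orth S) w :=
  fun w' hw' hw'S => M.expl_of_orth hw'S (hS w w' hw' h)

lemma sref_mono (A : Formula C) {w w' : M.pre.K} (h : M.pre.le w w') :
    M.pre.sref A w → M.pre.sref A w' := by
  induction A generalizing w w' with
  | atom p args => exact M.srefAtom_mono w w' p args h
  | top | bot => exact id
  | and A B _ _ => exact Or.imp (M.orth_mono h) (M.orth_mono h)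
  | or A B _ _ | imp A B _ _ => exact And.imp (M.orth_mono h) (M.orth_mono h)
  | all A _ => exact fun ⟨d, hd, hA⟩ => ⟨d, M.D_mono w w' h hd, M.orth_mono h hA⟩
  | ex A _ => exact fun hA w'' h' => hA w'' (M.le_trans _ _ _ h h')

lemma refute_of_sref {A : Formula C} {w : M.pre.K} (h : M.pre.sref A w) : M.pre.refute A w :=
  M.orth_orth_of_mono (fun _ _ => M.sref_mono A) h

lemma sref_imp_iff (A B : Formula C) (w : M.pre.K) :
    M.pre.sref (.imp A B) w ↔ M.pre.force A w ∧ M.pre.refute B w :=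
  Iff.rfl

end CKModel

/-- `w` forces `A → B` iff for all `w' ≥ w`, `w'` forcing `A`
implies `w'` forcing `B`. -/
theorem force_imp_iff {C : Type} (M : CKModel C) (A B : Formula C) (w : M.pre.K) :
    M.pre.force (Formula.imp A B) w ↔
      ∀ w', M.pre.le w w' → M.pre.force A w' → M.pre.force B w' := by
  constructor
  · intro hAB w' hw' hA w'' hw'' hB
    exact hAB w'' (M.le_trans _ _ _ hw' hw'')
      ((M.sref_imp_iff A B w'').2 ⟨M.orth_mono hw'' hA, M.refute_of_sref hB⟩)
  · intro hAB w' hw' hsref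
    obtain ⟨hA, hB⟩ := (M.sref_imp_iff A B w').1 hsref
    exact M.expl_of_orth hB (hAB w' hw' hA)
end

section
/- In any classical Kripke model, w refutes ∃x.A(x) if and only if w strongly refutes ∃x.A(x) (i.e., for all w' ≥ w and d ∈ D(w'), w' refutes A(d)). -/
/-!
Strong refutation of `∃x.A(x)` is the orthogonal of the set `V` of worlds forcing some instance
`A d` with `d` in their domain (monotonicity of domains lets the quantifiers over later worlds and
over their elements be merged). Refutation is the double orthogonal of strong refutation, hence
the triple orthogonal of `V`; since `V` is upward closed, `V ⊆ V⊥⊥`, and so `V⊥⊥⊥ = V⊥`.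
-/

namespace CKPre

variable {C : Type} (M : CKPre C)

def UpClosed (S : M.K → Prop) : Prop :=
  ∀ w w', M.le w w' → S w → S w'

def forcesInstance (A : C → Formula C) (w : M.K) : Prop :=
  ∃ d ∈ M.D w, M.force (A d) w

variable {M}

theorem orth_anti {S T : M.K → Prop} (hST : ∀ w, S w → T w) {w : M.K} :
    M.orth T w → M.orth S w :=
  fun h w' hw' hS => h w' hw' (hST w' hS)

end CKPre

namespace CKModel

variable {C : Type} (M : CKModel C)

theorem upClosed_orth (S : M.pre.K → Prop) : M.pre.UpClosed (M.pre.orth S) :=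
  fun _ _ hw h w'' hw'' => h w'' (M.le_trans _ _ _ hw hw'')

theorem orth_orth_of_upClosed {S : M.pre.K → Prop} (hS : M.pre.UpClosed S) {w : M.pre.K}
    (h : S w) : M.pre.orth (M.pre.orth S) w :=
  fun w' hw' hw'S => hw'S w' (M.le_refl w') (hS w w' hw' h)

theorem orth_orth_orth_of_upClosed {S : M.pre.K → Prop} (hS : M.pre.UpClosed S) (w : M.pre.K) :
    M.pre.orth (M.pre.orth (M.pre.orth S)) w ↔ M.pre.orth S w :=
  ⟨CKPre.orth_anti fun _ => M.orth_orth_of_upClosed hS,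
    M.orth_orth_of_upClosed (M.upClosed_orth S)⟩

theorem upClosed_forcesInstance (A : C → Formula C) : M.pre.UpClosed (M.pre.forcesInstance A) :=
  fun w w' hw ⟨d, hd, hforce⟩ => ⟨d, M.D_mono w w' hw hd, M.upClosed_orth _ w w' hw hforce⟩

theorem sref_ex_eq_orth_forcesInstance (A : C → Formula C) :
    M.pre.sref (.ex A) = M.pre.orth (M.pre.forcesInstance A) := by
  funext w
  apply propext
  constructor
  · rintro h w' hw' ⟨d, hd, hforce⟩
    exact h w' hw' d hd w' (M.le_refl w') hforce
  · intro h w' hw' d hd w'' hw'' hforce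
    exact h w'' (M.le_trans _ _ _ hw' hw'') ⟨d, M.D_mono w' w'' hw'' hd, hforce⟩

end CKModel

/-- refutation of an existential is equivalent to its strong
refutation, i.e. to refuting all instances in all future worlds. -/
theorem refute_ex_iff_sref {C : Type} (M : CKModel C) (A : C → Formula C) (w : M.pre.K) :
    M.pre.refute (Formula.ex A) w ↔ M.pre.sref (Formula.ex A) w := by
  rw [CKPre.refute, CKPre.force, M.sref_ex_eq_orth_forcesInstance A]
  exact M.orth_orth_orth_of_upClosed (M.upClosed_forcesInstance A) w
end

section
/- In any classical Kripke model, double negation elimination holds semantically: w forces A if and only if w forces ¬¬A, and w refutes A if and only if w refutes ¬¬A. -/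
/-!
Forcing is the orthogonal of strong refutation, and strong refutation of `¬A` is forcing of `A`.
Hence forcing `¬¬A` is the triple orthogonal of strong refutation of `A`, which collapses to the
single orthogonal, i.e. to forcing `A`, because strong refutation is persistent.
-/

def CKPre.IsPersistent {C : Type} (M : CKPre C) (S : M.K → Prop) : Prop :=
  ∀ ⦃w w'⦄, M.le w w' → S w → S w'

theorem CKPre.orth_anti_s13 {C : Type} (M : CKPre C) {S T : M.K → Prop} (hST : ∀ w, S w → T w)
    {w : M.K} (hT : M.orth T w) : M.orth S w :=
  fun w' hw' hS => hT w' hw' (hST w' hS)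

namespace CKModel

variable {C : Type} (M : CKModel C)

theorem isPersistent_orth (S : M.pre.K → Prop) : M.pre.IsPersistent (M.pre.orth S) :=
  fun _ _ hw ho w'' hw'' => ho w'' (M.le_trans _ _ _ hw hw'')

theorem orth_orth_of_isPersistent {S : M.pre.K → Prop} (hS : M.pre.IsPersistent S) {w : M.pre.K}
    (hw : S w) : M.pre.orth (M.pre.orth S) w :=
  fun w' hw' ho => ho w' (M.le_refl w') (hS hw' hw)

theorem orth_orth_orth {S : M.pre.K → Prop} (hS : M.pre.IsPersistent S) :
    M.pre.orth (M.pre.orth (M.pre.orth S)) = M.pre.orth S := by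
  funext w
  exact propext ⟨M.pre.orth_anti_s13 fun _ => M.orth_orth_of_isPersistent hS,
    M.orth_orth_of_isPersistent (M.isPersistent_orth S)⟩

theorem isPersistent_sref (A : Formula C) : M.pre.IsPersistent (M.pre.sref A) := by
  induction A with
  | atom p args => exact fun _ _ hw => M.srefAtom_mono _ _ p args hw
  | top | bot => exact fun _ _ _ h => h
  | and A B _ _ =>
      rintro _ _ hw (hA | hB)
      · exact Or.inl (M.isPersistent_orth _ hw hA)
      · exact Or.inr (M.isPersistent_orth _ hw hB)
  | or A B _ _ | imp A B _ _ =>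
      exact fun _ _ hw h => ⟨M.isPersistent_orth _ hw h.1, M.isPersistent_orth _ hw h.2⟩
  | all A _ =>
      rintro _ _ hw ⟨d, hd, h⟩
      exact ⟨d, M.D_mono _ _ hw hd, M.isPersistent_orth _ hw h⟩
  | ex A _ => exact fun _ _ hw h w'' hw'' => h w'' (M.le_trans _ _ _ hw hw'')

theorem sref_neg (A : Formula C) : M.pre.sref A.neg = M.pre.force A := by
  funext w
  exact propext ⟨And.left, fun h => ⟨h, fun w' hw' ho => ho w' (M.le_refl w') trivial⟩⟩

theorem force_neg (A : Formula C) : M.pre.force A.neg = M.pre.refute A := by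
  rw [CKPre.force, sref_neg, CKPre.refute]

theorem force_neg_neg (A : Formula C) : M.pre.force A.neg.neg = M.pre.force A := by
  rw [CKPre.force, sref_neg, force_neg, CKPre.refute, CKPre.force,
    M.orth_orth_orth (M.isPersistent_sref A)]

end CKModel

/-- semantic double negation elimination: `w` forces `A` iff
`w` forces `¬¬A`, and `w` refutes `A` iff `w` refutes `¬¬A`. -/
theorem double_negation_semantic {C : Type} (M : CKModel C) (A : Formula C) (w : M.pre.K) :
    (M.pre.force A w ↔ M.pre.force (Formula.neg (Formula.neg A)) w) ∧
    (M.pre.refute A w ↔ M.pre.refute (Formula.neg (Formula.neg A)) w) := by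
  rw [CKPre.refute, CKPre.refute, M.force_neg_neg]
  exact ⟨Iff.rfl, Iff.rfl⟩
end

section
/- Peirce's law is forced in every classical Kripke model: for all worlds w and sentences A, B, w forces ((A→B)→A)→A. -/
namespace CKPre

variable {C : Type} (M : CKPre C)

theorem sref_imp_iff {A B : Formula C} {w : M.K} :
    M.sref (.imp A B) w ↔ M.force A w ∧ M.refute B w :=
  Iff.rfl

theorem force_imp_of_refute {A : Formula C} (B : Formula C) {w : M.K} (h : M.refute A w) :
    M.force (.imp A B) w :=
  fun _ hv hAB => h _ hv hAB.1

end CKPre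

theorem CKModel.expl_of_force_of_sref {C : Type} (M : CKModel C) {A : Formula C} {w : M.pre.K}
    (hforce : M.pre.force A w) (hsref : M.pre.sref A w) : M.pre.expl w :=
  hforce w (M.le_refl w) hsref

/-- Peirce's law `((A→B)→A)→A` is forced in every world of
every classical Kripke model. -/
theorem peirce_forced {C : Type} (M : CKModel C) (A B : Formula C) (w : M.pre.K) :
    M.pre.force
      (Formula.imp (Formula.imp (Formula.imp A B) A) A) w := by
  intro w' _ hsref
  obtain ⟨hPeirce, hA⟩ := M.pre.sref_imp_iff.mp hsref
  exact M.expl_of_force_of_sref hPeirce ⟨M.pre.force_imp_of_refute B hA, hA⟩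
end
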